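/- arXiv:1202.5515 — 2 statements merged into one kernel-verified Lean document; each statement's English description precedes it below -/
import Mathlib

section
/- Let m be an integer and suppose r, s are integers with r² - m·s² = -1. Then m is a sum of two squares. -/
/-! From `r² + 1 = m s²` we get `m > 0` and `m ∣ r² + 1`, so `-1` is a square modulo `m`;
by the classical two-squares theorem (every prime factor of `m` is then `2` or `≡ 1 mod 4`),
`m` is a sum of two squares. -/

theorem ZMod.isSquare_neg_one_of_dvd_sq_add_one {n : ℕ} {r : ℤ} (h : (n : ℤ) ∣ r ^ 2 + 1) :
    IsSquare (-1 : ZMod n) := by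
  refine ⟨r, ?_⟩
  have hr : ((r ^ 2 + 1 : ℤ) : ZMod n) = 0 := (ZMod.intCast_zmod_eq_zero_iff_dvd _ _).2 h
  push_cast at hr
  linear_combination -hr

theorem Int.eq_sq_add_sq_of_dvd_sq_add_one {m r : ℤ} (hm : 0 ≤ m) (h : m ∣ r ^ 2 + 1) :
    ∃ a b : ℤ, m = a ^ 2 + b ^ 2 := by
  lift m to ℕ using hm
  obtain ⟨a, b, hab⟩ :=
    Nat.eq_sq_add_sq_of_isSquare_mod_neg_one (ZMod.isSquare_neg_one_of_dvd_sq_add_one h)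
  exact ⟨a, b, by exact_mod_cast hab⟩

theorem Int.pos_of_sq_sub_mul_sq_eq_neg_one {m r s : ℤ} (h : r ^ 2 - m * s ^ 2 = -1) : 0 < m :=
  pos_of_mul_pos_left (by nlinarith [sq_nonneg r] : 0 < m * s ^ 2) (sq_nonneg s)

theorem sum_of_two_squares_of_negPell (m r s : ℤ)
    (h : r ^ 2 - m * s ^ 2 = -1) :
    ∃ a b : ℤ, m = a ^ 2 + b ^ 2 :=
  Int.eq_sq_add_sq_of_dvd_sq_add_one (Int.pos_of_sq_sub_mul_sq_eq_neg_one h).le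
    (⟨s ^ 2, by linarith⟩ : m ∣ r ^ 2 + 1)
end

section
/- Let m ≡ 1 (mod 4) be a squarefree positive integer. If the negative Pell equation T² - mU² = -4 has an integral solution, then there exist integers a, b, x, y with m = a² + 4b² and bx² + axy - by² = 1. -/
/-!
If `T ^ 2 - m U ^ 2 = -4`, then `z = T + 2i` (for odd `T`) or `z = T / 2 + i` (for even `T`) is a
primitive Gaussian integer of odd norm `m V ^ 2`, so `z` and `z̄` are coprime. For `σ = gcd(z, V)`
this gives `σ ^ 2 ∣ z` and `N σ = ±V`, hence `z = δ σ ^ 2` with `N δ = m`. Writing `δ = A + B i` and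
`σ = x + y i`, the imaginary part `2 A x y + B (x ^ 2 - y ^ 2)` of `z` is `1` or `2`; parity then
makes `A` resp. `B` even, and halving it produces the representation of `m` and the value `1` of
the form `b X ^ 2 + a X Y - b Y ^ 2`.
-/

theorem sq_dvd_of_mul_eq_mul_sq {R : Type*} [CommRing R] [IsDomain R] {a b c d g : R}
    (hab : IsCoprime a b) (h : a * b = c * d ^ 2) (hga : g ∣ a) (hgd : g ∣ d) : g ^ 2 ∣ a := by
  obtain ⟨a', rfl⟩ := hga
  obtain ⟨d', rfl⟩ := hgd
  rcases eq_or_ne g 0 with rfl | hg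
  · simp
  have hdiv : g ∣ a' * b := ⟨c * d' ^ 2, mul_left_cancel₀ hg (by linear_combination h)⟩
  rw [sq]
  exact mul_dvd_mul_left g (hab.of_mul_left_left.dvd_of_dvd_mul_right hdiv)

namespace GaussianInt

theorem norm_eq_sq_add_sq (z : GaussianInt) : z.norm = z.re ^ 2 + z.im ^ 2 := by
  rw [Zsqrtd.norm_def]
  ring

theorem im_mul_sq (δ σ : GaussianInt) :
    (δ * σ ^ 2).im = 2 * δ.re * σ.re * σ.im + δ.im * (σ.re ^ 2 - σ.im ^ 2) := by
  simp only [sq, Zsqrtd.im_mul, Zsqrtd.re_mul]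
  ring

theorem star_dvd_star {a b : GaussianInt} (h : a ∣ b) : star a ∣ star b := by
  obtain ⟨c, rfl⟩ := h
  exact ⟨star c, star_mul' a c⟩

theorem isCoprime_star_of_odd_norm {z : GaussianInt} (hz : IsCoprime z.re z.im)
    (hodd : Odd z.norm) : IsCoprime z (star z) := by
  obtain ⟨u, v, huv⟩ := hz
  obtain ⟨k, hk⟩ := hodd
  rw [norm_eq_sq_add_sq] at hk
  -- `2 = (u - v i) z + (u + v i) z̄` and `z z̄ = 2 k + 1`
  refine ⟨star z - k * ⟨u, -v⟩, -(k * ⟨u, v⟩), ?_⟩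
  ext <;> simp only [Zsqrtd.smul_val, Zsqrtd.re_add, Zsqrtd.im_add, Zsqrtd.re_neg, Zsqrtd.im_neg,
    Zsqrtd.re_sub, Zsqrtd.im_sub, Zsqrtd.re_mul, Zsqrtd.im_mul, Zsqrtd.re_star, Zsqrtd.im_star,
    Zsqrtd.re_one, Zsqrtd.im_one]
  · linear_combination hk - 2 * k * huv
  · ring

theorem exists_eq_mul_sq_of_norm_eq {z : GaussianInt} {m V : ℤ} (hz : IsCoprime z (star z))
    (hV : V ≠ 0) (hN : z.norm = m * V ^ 2) : ∃ δ σ : GaussianInt, z = δ * σ ^ 2 ∧ δ.norm = m := by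
  have hzz : z * star z = m * (V : GaussianInt) ^ 2 := by
    rw [← Zsqrtd.norm_eq_mul_conj, hN]
    norm_cast
  set σ := EuclideanDomain.gcd z (V : GaussianInt)
  have hσz : σ ∣ z := EuclideanDomain.gcd_dvd_left _ _
  have hσV : σ ∣ V := EuclideanDomain.gcd_dvd_right _ _
  obtain ⟨δ, hδ⟩ := sq_dvd_of_mul_eq_mul_sq hz hzz hσz hσV
  have hσσV : σ * star σ ∣ V := by
    refine ((hz.of_isCoprime_of_dvd_left hσz).of_isCoprime_of_dvd_right
      (star_dvd_star hσz)).mul_dvd hσV ?_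
    simpa using star_dvd_star hσV
  -- `σ` lies in the ideal `(z, V)`, and `V ∣ z * star z`.
  have hVσσ : (V : GaussianInt) ∣ σ * star σ := by
    set a := EuclideanDomain.gcdA z (V : GaussianInt)
    set b := EuclideanDomain.gcdB z (V : GaussianInt)
    have hσ : σ = z * a + V * b := EuclideanDomain.gcd_eq_gcd_ab _ _
    refine ⟨m * V * a * star a + z * a * star b + b * star z * star a + V * b * star b, ?_⟩
    rw [hσ]
    simp only [star_add, star_mul, star_intCast]
    linear_combination a * star a * hzz
  have hnorm : σ.norm ^ 2 = V ^ 2 := by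
    rw [← Zsqrtd.norm_eq_mul_conj, Zsqrtd.intCast_dvd_intCast] at hσσV hVσσ
    rw [← Int.natAbs_sq, ← Int.natAbs_sq V, Int.natAbs_eq_of_dvd_dvd hσσV hVσσ]
  refine ⟨δ, σ, by rw [hδ]; ring, mul_right_cancel₀ (pow_ne_zero 2 hV) ?_⟩
  rw [← hN, hδ, ← hnorm, Zsqrtd.norm_mul, sq σ, Zsqrtd.norm_mul]
  ring

theorem exists_form_of_im_mul_sq_eq_one {δ σ : GaussianInt} (hδ : Odd δ.norm)
    (h : (δ * σ ^ 2).im = 1) :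
    ∃ a b x y : ℤ, δ.norm = a ^ 2 + 4 * b ^ 2 ∧ b * x ^ 2 + a * x * y - b * y ^ 2 = 1 := by
  rw [im_mul_sq] at h
  rw [norm_eq_sq_add_sq] at hδ ⊢
  have hB : Odd δ.im := (Int.odd_mul.mp
    (⟨-(δ.re * σ.re * σ.im), by linear_combination h⟩ : Odd (δ.im * (σ.re ^ 2 - σ.im ^ 2)))).1
  obtain ⟨α, hα⟩ : Even δ.re := by
    have : Even (δ.re ^ 2) := by simpa using hδ.sub_odd (hB.pow (n := 2))
    exact (Int.even_pow.mp this).1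
  exact ⟨δ.im, α, σ.re + σ.im, σ.re - σ.im, by rw [hα]; ring,
    by linear_combination h - 2 * σ.re * σ.im * hα⟩

theorem exists_form_of_im_mul_sq_eq_two {δ σ : GaussianInt} (hσ : Odd σ.norm)
    (h : (δ * σ ^ 2).im = 2) :
    ∃ a b x y : ℤ, δ.norm = a ^ 2 + 4 * b ^ 2 ∧ b * x ^ 2 + a * x * y - b * y ^ 2 = 1 := by
  rw [im_mul_sq] at h
  rw [norm_eq_sq_add_sq] at hσ ⊢
  have hdiff : Odd (σ.re ^ 2 - σ.im ^ 2) := by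
    obtain ⟨k, hk⟩ := hσ
    exact ⟨k - σ.im ^ 2, by linear_combination hk⟩
  obtain ⟨β, hβ⟩ : Even δ.im :=
    (Int.even_mul.mp (⟨1 - δ.re * σ.re * σ.im, by linear_combination h⟩ :
      Even (δ.im * (σ.re ^ 2 - σ.im ^ 2)))).resolve_right
      (Int.not_even_iff_odd.mpr hdiff)
  refine ⟨δ.re, β, σ.re, σ.im, by rw [hβ]; ring, ?_⟩
  rw [hβ] at h
  linarith

end GaussianInt

theorem exists_gaussianInt_of_negPell {m T U : ℤ} (hmod : m % 4 = 1)
    (h : T ^ 2 - m * U ^ 2 = -4) :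
    ∃ (z : GaussianInt) (V : ℤ), IsCoprime z.re z.im ∧ Odd z.norm ∧ z.norm = m * V ^ 2 ∧
      (z.im = 1 ∨ z.im = 2) := by
  have hm : ¬ Even m := by rw [Int.even_iff]; omega
  have even_of_even_mul_sq : ∀ X : ℤ, Even (m * X ^ 2) → Even X := fun X hX =>
    (Int.even_pow.mp ((Int.even_mul.mp hX).resolve_left hm)).1
  rcases Int.even_or_odd T with ⟨t, rfl⟩ | hT
  · obtain ⟨u, rfl⟩ := even_of_even_mul_sq U ⟨2 * t ^ 2 + 2, by linear_combination -h⟩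
    have htu : t ^ 2 + 1 = m * u ^ 2 := by linarith
    -- for odd `t`, `t ^ 2 + 1 ≡ 2 (mod 4)`, while `m * u ^ 2 ≡ 0 (mod 4)` since it is even
    have ht : Even t := by
      by_contra ht
      obtain ⟨k, rfl⟩ := Int.not_even_iff_odd.mp ht
      obtain ⟨v, rfl⟩ := even_of_even_mul_sq u ⟨2 * k ^ 2 + 2 * k + 1, by linear_combination -htu⟩
      have : 4 * (k ^ 2 + k) + 2 = 4 * (m * v ^ 2) := by linear_combination htu
      omega
    refine ⟨⟨t, 1⟩, u, isCoprime_one_right, ?_, ?_, Or.inl rfl⟩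
    · simpa [GaussianInt.norm_eq_sq_add_sq] using (ht.pow_of_ne_zero two_ne_zero).add_one
    · rw [GaussianInt.norm_eq_sq_add_sq]
      linear_combination htu
  · refine ⟨⟨T, 2⟩, U, Int.isCoprime_two_right.mpr hT, ?_, ?_, Or.inr rfl⟩
    · simpa [GaussianInt.norm_eq_sq_add_sq] using (hT.pow (n := 2)).add_even (even_two.mul_left 2)
    · rw [GaussianInt.norm_eq_sq_add_sq]
      linear_combination h

theorem Qb_of_negPell_general (m : ℤ) (hmod : m % 4 = 1) (h : ∃ T U : ℤ, T ^ 2 - m * U ^ 2 = -4) :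
    ∃ a b x y : ℤ, m = a ^ 2 + 4 * b ^ 2 ∧
      b * x ^ 2 + a * x * y - b * y ^ 2 = 1 := by
  obtain ⟨T, U, h⟩ := h
  obtain ⟨z, V, hzre, hzodd, hzN, hzim⟩ := exists_gaussianInt_of_negPell hmod h
  have hV : V ≠ 0 := by
    rintro rfl
    simp [hzN] at hzodd
  obtain ⟨δ, σ, rfl, rfl⟩ := GaussianInt.exists_eq_mul_sq_of_norm_eq
    (GaussianInt.isCoprime_star_of_odd_norm hzre hzodd) hV hzN
  rw [Zsqrtd.norm_mul, Int.odd_mul, sq, Zsqrtd.norm_mul, Int.odd_mul, and_self] at hzodd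
  rcases hzim with him | him
  · exact GaussianInt.exists_form_of_im_mul_sq_eq_one hzodd.1 him
  · exact GaussianInt.exists_form_of_im_mul_sq_eq_two hzodd.2 him

theorem Qb_of_negPell (m : ℤ) (hm : 0 < m) (hsf : Squarefree m)
    (hmod : m % 4 = 1) (h : ∃ T U : ℤ, T ^ 2 - m * U ^ 2 = -4) :
    ∃ a b x y : ℤ, m = a ^ 2 + 4 * b ^ 2 ∧
      b * x ^ 2 + a * x * y - b * y ^ 2 = 1 :=
  Qb_of_negPell_general m hmod h
end
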